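/- Let M be a von Neumann algebra and A ∈ M positive. Then A is A-invertible (there exists S ∈ M^A with A·A·S = A·S·A = A) if and only if A is well-supported, and in that case σ_A(A) = σ(A)\{0}. -/

import Mathlib

open scoped ComplexOrder

set_option synthInstance.maxHeartbeats 1000000
set_option maxHeartbeats 1000000

noncomputable section

variable {H : Type*} [NormedAddCommGroup H] [InnerProductSpace ℂ H] [CompleteSpace H]

namespace ASpec

/-- `T` admits an `A^{1/2}`-adjoint in the von Neumann algebra `M`. -/
def HasHalfAdjointIn (M : VonNeumannAlgebra H) (A T : H →L[ℂ] H) : Prop :=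
  ∃ L ∈ M, CFC.sqrt A * T = ContinuousLinearMap.adjoint L * CFC.sqrt A

/-- `M^A`: the elements of `M` admitting an `A^{1/2}`-adjoint in `M`. -/
def MA (M : VonNeumannAlgebra H) (A : H →L[ℂ] H) : Set (H →L[ℂ] H) :=
  {T | T ∈ M ∧ HasHalfAdjointIn M A T}

/-- `T` is `A`-invertible in `M^A`. -/
def AInvertible (M : VonNeumannAlgebra H) (A T : H →L[ℂ] H) : Prop :=
  ∃ S ∈ MA M A, A * T * S = A ∧ A * S * T = A

/-- The `A`-spectrum of `T`. -/
def ASpectrum (M : VonNeumannAlgebra H) (A T : H →L[ℂ] H) : Set ℂ :=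
  {lam : ℂ | ¬ AInvertible M A (lam • (1 : H →L[ℂ] H) - T)}

/-- The `A`-spectral radius of `T`. -/
def rA (M : VonNeumannAlgebra H) (A T : H →L[ℂ] H) : ℝ :=
  sSup ((fun z : ℂ => ‖z‖) '' ASpectrum M A T)

/-- The spectrum of `P * T * P` in the corner algebra `P M P` (with unit `P`). -/
def cornerSpectrum (M : VonNeumannAlgebra H) (P T : H →L[ℂ] H) : Set ℂ :=
  {lam : ℂ | ¬ ∃ S ∈ M, P * S * P = S ∧
      (lam • P - P * T * P) * S = P ∧ S * (lam • P - P * T * P) = P}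

/-- `P` is the orthogonal projection onto the closure of the range of `A`. -/
def IsRangeProjection (A P : H →L[ℂ] H) : Prop :=
  IsSelfAdjoint P ∧ P * P = P ∧
    LinearMap.range (P : H →ₗ[ℂ] H) =
      (LinearMap.range (A : H →ₗ[ℂ] H)).topologicalClosure

/-- `A` is well-supported: `σ(A) \ {0}` is closed. -/
def WellSupported (A : H →L[ℂ] H) : Prop := IsClosed (spectrum ℂ A \ {0})

/-- the `A`-seminorm `‖T‖_A = sup {‖Th‖_A : ‖h‖_A = 1}`. -/
def normA (A T : H →L[ℂ] H) : ℝ :=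
  sSup {r : ℝ | ∃ h : H, (inner ℂ (A h) h : ℂ) = 1 ∧
    r = Real.sqrt (Complex.re (inner ℂ (A (T h)) (T h)))}

end ASpec

section StmtAuxSection

open ASpec

lemma isClosed_centralizer' (s : Set (H →L[ℂ] H)) : IsClosed (Set.centralizer s) := by
  have h : Set.centralizer s = ⋂ m ∈ s, {T : H →L[ℂ] H | m * T = T * m} := by
    ext T; simp [Set.mem_centralizer_iff]
  rw [h]
  exact isClosed_biInter fun m _ => isClosed_eq (continuous_const.mul continuous_id)
      (continuous_id.mul continuous_const)

lemma cfc_mem_vN (M : VonNeumannAlgebra H) {A : H →L[ℂ] H} (hAM : A ∈ M) (hA : IsStarNormal A)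
    (f : ℂ → ℂ) : cfc f A ∈ M := by
  have hMc : IsClosed (M : Set (H →L[ℂ] H)) := by
    rw [← M.centralizer_centralizer]; exact isClosed_centralizer' _
  by_cases hf : ContinuousOn f (spectrum ℂ A)
  · have h1 : cfc f A ∈ StarAlgebra.elemental ℂ A := by
      rw [cfc_apply f A hA hf, cfcHom_eq_of_isStarNormal]
      exact SetLike.coe_mem _
    exact StarAlgebra.elemental.le_of_mem (S := M.toStarSubalgebra) hMc hAM h1
  · rw [cfc_apply_of_not_continuousOn A hf]; exact zero_mem M

lemma spec_re' {A : H →L[ℂ] H} (hA : A.IsPositive) {z : ℂ} (hz : z ∈ spectrum ℂ A) :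
    z = (z.re : ℂ) ∧ 0 ≤ z.re := by
  have h := spectrum_nonneg_of_nonneg ((ContinuousLinearMap.nonneg_iff_isPositive A).2 hA) hz
  obtain ⟨h1, h2⟩ := Complex.le_def.mp h
  have him : z.im = 0 := by simpa using h2.symm
  exact ⟨(Complex.ext (by simp) (by simp [him])).symm, by simpa using h1⟩

lemma sqrt_eq_cfc_complex {A : H →L[ℂ] H} (hA : A.IsPositive) :
    CFC.sqrt A = cfc (fun z : ℂ => ((NNReal.sqrt z.re.toNNReal : ℝ) : ℂ)) A := by
  have h0 : (0 : H →L[ℂ] H) ≤ A := (ContinuousLinearMap.nonneg_iff_isPositive A).2 hA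
  rw [CFC.sqrt_eq_cfc, cfc_nnreal_eq_real _ A h0, cfc_real_eq_complex]

lemma alpha_of_wellSupported {A : H →L[ℂ] H} (hws : IsClosed (spectrum ℂ A \ {0})) :
    ∃ α : ℝ, 0 < α ∧ ∀ z ∈ spectrum ℂ A, z ≠ 0 → α ≤ ‖z‖ := by
  rcases Set.eq_empty_or_nonempty (spectrum ℂ A \ {0}) with he | hne
  · exact ⟨1, one_pos, fun z hz hz0 => absurd (Set.mem_diff_singleton.mpr ⟨hz, hz0⟩)
      (he ▸ Set.notMem_empty z)⟩
  · have hcpt : IsCompact (spectrum ℂ A \ {0}) :=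
      (spectrum.isCompact A).of_isClosed_subset hws Set.diff_subset
    obtain ⟨z₀, hz₀, hmin⟩ := hcpt.exists_isMinOn hne continuous_norm.continuousOn
    exact ⟨‖z₀‖, norm_pos_iff.mpr hz₀.2, fun z hz hz0 => hmin ⟨hz, hz0⟩⟩

lemma wellSupported_of_alpha {A : H →L[ℂ] H} {α : ℝ} (hα : 0 < α)
    (h : ∀ z ∈ spectrum ℂ A, z ≠ 0 → α ≤ ‖z‖) : IsClosed (spectrum ℂ A \ {0}) := by
  have he : spectrum ℂ A \ {0} = spectrum ℂ A ∩ {z : ℂ | α ≤ ‖z‖} := by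
    ext z
    constructor
    · rintro ⟨hz, hz0⟩; exact ⟨hz, h z hz hz0⟩
    · rintro ⟨hz, hz0⟩
      refine ⟨hz, ?_⟩
      simp only [Set.mem_singleton_iff]
      intro h0
      rw [h0] at hz0; simp only [Set.mem_setOf_eq, norm_zero] at hz0; linarith
  rw [he]
  exact (spectrum.isClosed A).inter (isClosed_le continuous_const continuous_norm)

lemma bump_bound {A : H →L[ℂ] H} (hA : A.IsPositive) {t ε : ℝ} (ht : (t:ℂ) ∈ spectrum ℂ A)
    (ht0 : 0 < t) (hε : 0 < ε) {w : ℂ → ℂ} (hw : ContinuousOn w (spectrum ℂ A))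
    {C : ℝ} (hC : 0 ≤ C)
    (hwb : ∀ z ∈ spectrum ℂ A, ‖z - (t:ℂ)‖ ≤ ε → ‖z * w z‖ ≤ C)
    {S : H →L[ℂ] H} (heq : A * cfc w A * S = A) : t ≤ C * ‖S‖ := by
  have hsa : IsSelfAdjoint A := hA.isSelfAdjoint
  haveI : IsStarNormal A := hsa.isStarNormal
  set f : ℂ → ℂ := fun z => ((max 0 (1 - ‖z - (t:ℂ)‖ / ε) : ℝ) : ℂ) with hfdef
  have hfc : Continuous f := by
    apply Complex.continuous_ofReal.comp
    exact continuous_const.max (continuous_const.sub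
      ((continuous_norm.comp (continuous_id.sub continuous_const)).div_const ε))
  have hfnorm : ∀ z, ‖f z‖ ≤ 1 := by
    intro z
    rw [hfdef]
    simp only [Complex.norm_real, Real.norm_eq_abs]
    rw [abs_of_nonneg (le_max_left _ _)]
    refine max_le (by norm_num) ?_
    have : 0 ≤ ‖z - (t:ℂ)‖ / ε := div_nonneg (norm_nonneg _) hε.le
    linarith
  have hf0 : ∀ z, ε ≤ ‖z - (t:ℂ)‖ → f z = 0 := by
    intro z hz
    have h1 : 1 - ‖z - (t:ℂ)‖ / ε ≤ 0 := by
      rw [sub_nonpos, le_div_iff₀ hε]; linarith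
    simp [hfdef, max_eq_left h1]
  have hft : f (t:ℂ) = 1 := by simp [hfdef]
  haveI : Nontrivial H := by
    rcases subsingleton_or_nontrivial H with hH | hH
    · exact ((spectrum.mem_iff.mp ht) (isUnit_of_subsingleton _)).elim
    · exact hH
  have hid : cfc (fun z : ℂ => z) A = A := cfc_id' ℂ A
  have hidc : ContinuousOn (fun z : ℂ => z) (spectrum ℂ A) := continuousOn_id
  have hzw : ContinuousOn (fun z : ℂ => z * w z) (spectrum ℂ A) := hidc.mul hw
  have e1 : cfc (fun z : ℂ => f z * (z * w z)) A = cfc f A * (A * cfc w A) := by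
    rw [cfc_mul f (fun z : ℂ => z * w z) A hfc.continuousOn hzw,
        cfc_mul (fun z : ℂ => z) w A hidc hw, hid]
  have e2 : cfc (fun z : ℂ => f z * z) A = cfc f A * A := by
    rw [cfc_mul f (fun z : ℂ => z) A hfc.continuousOn hidc, hid]
  have e3 : cfc (fun z : ℂ => f z * z) A = cfc (fun z => f z * (z * w z)) A * S := by
    rw [e2, e1, mul_assoc (cfc f A) (A * cfc w A) S, heq]
  have hmem : (t:ℂ) ∈ spectrum ℂ (cfc (fun z : ℂ => f z * z) A) := by
    rw [cfc_map_spectrum (fun z : ℂ => f z * z) A ‹_› (hfc.continuousOn.mul hidc)]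
    exact ⟨(t:ℂ), ht, by simp [hft]⟩
  have hlow : t ≤ ‖cfc (fun z : ℂ => f z * z) A‖ := by
    have h := spectrum.norm_le_norm_of_mem hmem
    rwa [Complex.norm_real, Real.norm_eq_abs, abs_of_pos ht0] at h
  have hup : ‖cfc (fun z : ℂ => f z * (z * w z)) A‖ ≤ C := by
    apply norm_cfc_le hC
    intro z hz
    rcases le_or_gt ε (‖z - (t:ℂ)‖) with h | h
    · rw [hf0 z h, zero_mul, norm_zero]; exact hC
    · calc ‖f z * (z * w z)‖ = ‖f z‖ * ‖z * w z‖ := norm_mul _ _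
        _ ≤ 1 * C := mul_le_mul (hfnorm z) (hwb z hz h.le) (norm_nonneg _) one_pos.le
        _ = C := one_mul C
  calc t ≤ ‖cfc (fun z : ℂ => f z * z) A‖ := hlow
    _ = ‖cfc (fun z : ℂ => f z * (z * w z)) A * S‖ := by rw [e3]
    _ ≤ ‖cfc (fun z : ℂ => f z * (z * w z)) A‖ * ‖S‖ := norm_mul_le _ _
    _ ≤ C * ‖S‖ := mul_le_mul_of_nonneg_right hup (norm_nonneg _)

lemma exists_S {A : H →L[ℂ] H} (hA : A.IsPositive) {α : ℝ} (hα0 : 0 < α)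
    (hα : ∀ z ∈ spectrum ℂ A, z ≠ 0 → α ≤ ‖z‖) :
    ∃ f : ℂ → ℂ, Continuous f ∧ (∀ z, star (f z) = f z) ∧
      A * A * cfc f A = A ∧ A * cfc f A * A = A := by
  have hsa : IsSelfAdjoint A := hA.isSelfAdjoint
  haveI : IsStarNormal A := hsa.isStarNormal
  set f : ℂ → ℂ := fun z => ((z.re / (max z.re α)^2 : ℝ) : ℂ) with hfdef
  have hmaxpos : ∀ z : ℂ, (0:ℝ) < (max z.re α)^2 := fun z =>
    pow_pos (lt_max_of_lt_right hα0) 2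
  have hfc : Continuous f := by
    apply Complex.continuous_ofReal.comp
    exact Complex.continuous_re.div ((Complex.continuous_re.max continuous_const).pow 2)
      (fun z => (hmaxpos z).ne')
  have hstar : ∀ z, star (f z) = f z := fun z => Complex.conj_ofReal _
  have hkey : ∀ z ∈ spectrum ℂ A, z * z * f z = z := by
    intro z hz
    obtain ⟨hze, hznn⟩ := spec_re' hA hz
    rcases eq_or_ne z 0 with h0 | h0
    · simp [h0]
    · have hzre : α ≤ z.re := by
        have h := hα z hz h0
        rwa [hze, Complex.norm_real, Real.norm_eq_abs, abs_of_nonneg hznn] at h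
      have hre0 : 0 < z.re := lt_of_lt_of_le hα0 hzre
      have hmax : max z.re α = z.re := max_eq_left hzre
      rw [hfdef]
      simp only [hmax]
      rw [hze]
      push_cast
      simp only [Complex.ofReal_re]
      field_simp
  have hid : cfc (fun z : ℂ => z) A = A := cfc_id' ℂ A
  have hidc : ContinuousOn (fun z : ℂ => z) (spectrum ℂ A) := continuousOn_id
  have e1 : A * A * cfc f A = A := by
    have h : cfc (fun z : ℂ => z * z * f z) A = A * A * cfc f A := by
      rw [cfc_mul (fun z : ℂ => z * z) f A (hidc.mul hidc) hfc.continuousOn,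
          cfc_mul (fun z : ℂ => z) (fun z : ℂ => z) A hidc hidc, hid]
    rw [← h, cfc_congr hkey, hid]
  have e2 : A * cfc f A * A = A := by
    have hkey2 : ∀ z ∈ spectrum ℂ A, z * f z * z = z := fun z hz =>
      (mul_right_comm z (f z) z).trans (hkey z hz)
    have h : cfc (fun z : ℂ => z * f z * z) A = A * cfc f A * A := by
      rw [cfc_mul (fun z : ℂ => z * f z) (fun z : ℂ => z) A (hidc.mul hfc.continuousOn) hidc,
          cfc_mul (fun z : ℂ => z) f A hidc hfc.continuousOn, hid]
    rw [← h, cfc_congr hkey2, hid]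
  exact ⟨f, hfc, hstar, e1, e2⟩

lemma cfc_MA (M : VonNeumannAlgebra H) {A : H →L[ℂ] H} (hA : A.IsPositive) (hAM : A ∈ M)
    (g : ℂ → ℂ) : cfc g A ∈ MA M A := by
  have hsa : IsSelfAdjoint A := hA.isSelfAdjoint
  haveI : IsStarNormal A := hsa.isStarNormal
  refine ⟨cfc_mem_vN M hAM ‹_› g, cfc (fun z => star (g z)) A, cfc_mem_vN M hAM ‹_› _, ?_⟩
  have h1 : cfc (fun z => star (star (g z))) A = star (cfc (fun z => star (g z)) A) :=
    cfc_star _ A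
  simp only [star_star] at h1
  rw [← ContinuousLinearMap.star_eq_adjoint, ← h1, sqrt_eq_cfc_complex hA]
  exact (cfc_commute_cfc _ g A).eq

lemma resolvent_ainv (M : VonNeumannAlgebra H) {A : H →L[ℂ] H} (hA : A.IsPositive)
    (hAM : A ∈ M) {lam : ℂ} (hlam : lam ∉ spectrum ℂ A) :
    AInvertible M A (lam • (1 : H →L[ℂ] H) - A) := by
  have hsa : IsSelfAdjoint A := hA.isSelfAdjoint
  haveI : IsStarNormal A := hsa.isStarNormal
  set r : ℂ → ℂ := fun z => (lam - z)⁻¹ with hrdef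
  have hne : ∀ z ∈ spectrum ℂ A, lam - z ≠ 0 := by
    intro z hz
    exact sub_ne_zero_of_ne (by rintro rfl; exact hlam hz)
  have hsubc : ContinuousOn (fun z : ℂ => lam - z) (spectrum ℂ A) :=
    continuousOn_const.sub continuousOn_id
  have hrc : ContinuousOn r (spectrum ℂ A) := hsubc.inv₀ hne
  have hid : cfc (fun z : ℂ => z) A = A := cfc_id' ℂ A
  have hidc : ContinuousOn (fun z : ℂ => z) (spectrum ℂ A) := continuousOn_id
  have hconst : lam • (1 : H →L[ℂ] H) - A = cfc (fun z : ℂ => lam - z) A := by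
    rw [cfc_sub (fun _ : ℂ => lam) (fun z : ℂ => z) A continuousOn_const hidc,
      cfc_const lam A, hid, Algebra.algebraMap_eq_smul_one]
  refine ⟨cfc r A, cfc_MA M hA hAM r, ?_, ?_⟩
  · have e : cfc (fun z : ℂ => z * (lam - z) * r z) A
        = A * cfc (fun z : ℂ => lam - z) A * cfc r A := by
      rw [cfc_mul (fun z : ℂ => z * (lam - z)) r A (hidc.mul hsubc) hrc,
          cfc_mul (fun z : ℂ => z) (fun z : ℂ => lam - z) A hidc hsubc, hid]
    rw [hconst, ← e, cfc_congr (g := fun z : ℂ => z)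
      (fun z hz => mul_inv_cancel_right₀ (hne z hz) z), hid]
  · have e : cfc (fun z : ℂ => z * r z * (lam - z)) A
        = A * cfc r A * cfc (fun z : ℂ => lam - z) A := by
      rw [cfc_mul (fun z : ℂ => z * r z) (fun z : ℂ => lam - z) A (hidc.mul hrc) hsubc,
          cfc_mul (fun z : ℂ => z) r A hidc hrc, hid]
    rw [hconst, ← e, cfc_congr (g := fun z : ℂ => z)
      (fun z hz => inv_mul_cancel_right₀ (hne z hz) z), hid]

end StmtAuxSection

open ASpec in
theorem stmt9 (M : VonNeumannAlgebra H) (A : H →L[ℂ] H) (hA : A.IsPositive) (hAM : A ∈ M) :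
    (AInvertible M A A ↔ WellSupported A) ∧
    (WellSupported A → ASpectrum M A A = spectrum ℂ A \ {0}) := by
  have hsa : IsSelfAdjoint A := hA.isSelfAdjoint
  haveI : IsStarNormal A := hsa.isStarNormal
  -- backward: well-supported implies A-invertible
  have hAinv_of_ws : WellSupported A → AInvertible M A A := by
    intro hws
    obtain ⟨α, hα0, hα⟩ := alpha_of_wellSupported hws
    obtain ⟨f, hfc, hstar, e1, e2⟩ := exists_S hA hα0 hα
    exact ⟨cfc f A, cfc_MA M hA hAM f, e1, e2⟩
  -- forward: A-invertible implies well-supported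
  have hws_of_inv : AInvertible M A A → WellSupported A := by
    rintro ⟨S, -, h1, -⟩
    apply wellSupported_of_alpha (α := 4/(9*(‖S‖+1))) (by positivity)
    intro z hz hz0
    obtain ⟨hze, hznn⟩ := spec_re' hA hz
    have htne : z.re ≠ 0 := fun h => hz0 (by rw [hze, h]; simp)
    have ht0 : 0 < z.re := lt_of_le_of_ne hznn (Ne.symm htne)
    have ht : ((z.re : ℝ) : ℂ) ∈ spectrum ℂ A := hze ▸ hz
    have heq : A * cfc (fun y : ℂ => y) A * S = A := by rw [cfc_id' ℂ A]; exact h1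
    have hwb : ∀ y ∈ spectrum ℂ A, ‖y - (z.re:ℂ)‖ ≤ z.re/2 →
        ‖y * y‖ ≤ 9/4*z.re^2 := by
      intro y hy hybnd
      have hy1 : ‖y‖ ≤ 3/2 * z.re := by
        calc ‖y‖ = ‖(y - (z.re:ℂ)) + (z.re:ℂ)‖ := by rw [sub_add_cancel]
          _ ≤ ‖y - (z.re:ℂ)‖ + ‖(z.re:ℂ)‖ := norm_add_le _ _
          _ ≤ z.re/2 + z.re := by
              rw [Complex.norm_real, Real.norm_eq_abs,
                abs_of_pos ht0]
              exact add_le_add_left hybnd _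
          _ = 3/2 * z.re := by ring
      rw [norm_mul]
      nlinarith [norm_nonneg y]
    have hb := bump_bound hA ht ht0 (half_pos ht0)
      (continuousOn_id (s := spectrum ℂ A)) (by positivity) hwb heq
    have hnorm : ‖z‖ = z.re := by
      rw [hze, Complex.norm_real, Real.norm_eq_abs, Complex.ofReal_re, abs_of_pos ht0]
    rw [hnorm, div_le_iff₀ (by positivity)]
    nlinarith [mul_le_mul_of_nonneg_left hb ht0.le, norm_nonneg S, mul_pos ht0 ht0]
  refine ⟨⟨hws_of_inv, hAinv_of_ws⟩, fun hws => ?_⟩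
  ext lam
  simp only [ASpectrum, Set.mem_setOf_eq, Set.mem_diff, Set.mem_singleton_iff]
  constructor
  · intro hnot
    by_contra hc
    push_neg at hc
    apply hnot
    rcases em (lam ∈ spectrum ℂ A) with hmem | hmem
    · have h0 : lam = 0 := hc hmem
      subst h0
      obtain ⟨S, ⟨hSM, L, hLM, hL⟩, h1, h2⟩ := hAinv_of_ws hws
      refine ⟨-S, ⟨neg_mem hSM, -L, neg_mem hLM, ?_⟩, ?_, ?_⟩
      · rw [mul_neg, hL, map_neg, neg_mul]
      · rw [zero_smul, zero_sub, mul_neg A A, neg_mul_neg]; exact h1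
      · rw [zero_smul, zero_sub, mul_neg A S, neg_mul_neg]; exact h2
    · exact resolvent_ainv M hA hAM hmem
  · rintro ⟨hmem, hne0⟩ hinv
    obtain ⟨S, -, h1, -⟩ := hinv
    obtain ⟨hze, hznn⟩ := spec_re' hA hmem
    have htne : lam.re ≠ 0 := fun h => hne0 (by rw [hze, h]; simp)
    have ht0 : 0 < lam.re := lt_of_le_of_ne hznn (Ne.symm htne)
    have ht : ((lam.re : ℝ) : ℂ) ∈ spectrum ℂ A := hze ▸ hmem
    set ε : ℝ := min (lam.re/2) (1/(3*(‖S‖+1))) with hεdef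
    have hε : 0 < ε := lt_min (half_pos ht0) (by positivity)
    have hεt : ε ≤ lam.re/2 := min_le_left _ _
    have hεS : ε ≤ 1/(3*(‖S‖+1)) := min_le_right _ _
    have hsubc : ContinuousOn (fun z : ℂ => lam - z) (spectrum ℂ A) :=
      continuousOn_const.sub continuousOn_id
    have hconst : lam • (1 : H →L[ℂ] H) - A = cfc (fun z : ℂ => lam - z) A := by
      rw [cfc_sub (fun _ : ℂ => lam) (fun z : ℂ => z) A continuousOn_const
        (continuousOn_id (s := spectrum ℂ A)), cfc_const lam A, cfc_id' ℂ A,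
        Algebra.algebraMap_eq_smul_one]
    rw [hconst] at h1
    have hwb : ∀ y ∈ spectrum ℂ A, ‖y - (lam.re:ℂ)‖ ≤ ε →
        ‖y * (lam - y)‖ ≤ 3/2*lam.re*ε := by
      intro y hy hybnd
      have hy1 : ‖y‖ ≤ 3/2 * lam.re := by
        calc ‖y‖ = ‖(y - (lam.re:ℂ)) + (lam.re:ℂ)‖ := by rw [sub_add_cancel]
          _ ≤ ‖y - (lam.re:ℂ)‖ + ‖(lam.re:ℂ)‖ := norm_add_le _ _
          _ ≤ ε + lam.re := by
              rw [Complex.norm_real, Real.norm_eq_abs,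
                abs_of_pos ht0]
              exact add_le_add_left hybnd _
          _ ≤ 3/2 * lam.re := by linarith
      have hy2 : ‖lam - y‖ ≤ ε := by
        rw [← norm_neg, neg_sub]
        calc ‖y - lam‖ = ‖y - (lam.re:ℂ)‖ := by rw [← hze]
          _ ≤ ε := hybnd
      rw [norm_mul]
      calc ‖y‖ * ‖lam - y‖ ≤ (3/2*lam.re) * ε :=
        mul_le_mul hy1 hy2 (norm_nonneg _) (by positivity)
        _ = 3/2*lam.re*ε := by ring
    have hb := bump_bound hA ht ht0 hε hsubc (by positivity) hwb h1
    have h3 : ε * (3*(‖S‖+1)) ≤ 1 := by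
      rw [← le_div_iff₀ (by positivity)]
      simpa [one_div] using hεS
    nlinarith [mul_le_mul_of_nonneg_left h3 ht0.le, mul_pos ht0 hε, norm_nonneg S]
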